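/- arXiv:2604.24821 — 2 statements merged into one kernel-verified Lean document; each statement's English description precedes it below -/
import Mathlib

section
/- With f(x) = Σ_{k=1}^∞ (L/2^k)·g(α^k x) where g(x) = Π_{j=1}^∞ 1/(1 + α^j x), L > 0, 0 < α < 1, there exist constants 0 < c ≤ C such that c·x^{-1/d_F} ≤ f(x) ≤ C·x^{-1/d_F} for all x ≥ 1, where d_F = log(4/q)/log 2 and α = q/4, i.e. α^{1/d_F} = 1/2. -/
open Real

private lemma geom_head (r : ℝ) (hr : 2 ≤ r) (N : ℕ) :
    ∑ k ∈ Finset.range N, r ^ (k + 1) ≤ 2 * r ^ N := by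
  induction N with
  | zero => norm_num
  | succ n ih =>
    rw [Finset.sum_range_succ, pow_succ]
    have hrpos : 0 < r ^ n := pow_pos (by linarith) n
    nlinarith

private lemma g_bounds (α y : ℝ) (hα0 : 0 < α) (hα1 : α ≤ 1 / 4) (hy : 0 ≤ y) :
    0 ≤ (∏' j : ℕ, (1 + α ^ (j + 1) * y)⁻¹) ∧
      (∏' j : ℕ, (1 + α ^ (j + 1) * y)⁻¹) ≤ (1 + α * y)⁻¹ ∧
      (y ≤ 1 → Real.exp (-(1 / 3)) ≤ ∏' j : ℕ, (1 + α ^ (j + 1) * y)⁻¹) := by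
  have hden : ∀ j : ℕ, (1 : ℝ) ≤ 1 + α ^ (j + 1) * y := fun j =>
    le_add_of_nonneg_right (mul_nonneg (pow_pos hα0 (j + 1)).le hy)
  set h : ℕ → ℝ := fun j => (1 + α ^ (j + 1) * y)⁻¹ with hh
  have hpos : ∀ j, 0 < h j := fun j => inv_pos.mpr (lt_of_lt_of_le one_pos (hden j))
  have hle1 : ∀ j, h j ≤ 1 := fun j => inv_le_one_of_one_le₀ (hden j)
  set F : ℕ → NNReal := fun j => ⟨h j, (hpos j).le⟩ with hF
  have hFle1 : ∀ j, F j ≤ 1 := fun j => by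
    rw [← NNReal.coe_le_coe]; exact hle1 j
  have hant : Antitone fun s : Finset ℕ => ∏ j ∈ s, F j := by
    intro s t hst
    dsimp only
    rw [← Finset.prod_sdiff hst]
    calc (∏ j ∈ t \ s, F j) * ∏ j ∈ s, F j
        ≤ 1 * ∏ j ∈ s, F j :=
          mul_le_mul_left (Finset.prod_le_one' fun j _ => hFle1 j) _
      _ = ∏ j ∈ s, F j := one_mul _
  have hProd : HasProd F (⨅ s : Finset ℕ, ∏ j ∈ s, F j) :=
    tendsto_atTop_ciInf hant (OrderBot.bddBelow _)
  have hR : HasProd h ((⨅ s : Finset ℕ, ∏ j ∈ s, F j : NNReal) : ℝ) := by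
    have := hProd.map (NNReal.toRealHom.toMonoidHom) NNReal.continuous_coe
    exact this
  have htp : (∏' j : ℕ, (1 + α ^ (j + 1) * y)⁻¹) =
      ((⨅ s : Finset ℕ, ∏ j ∈ s, F j : NNReal) : ℝ) := hR.tprod_eq
  refine ⟨by rw [htp]; exact NNReal.coe_nonneg _, ?_, ?_⟩
  · rw [htp]
    refine le_of_tendsto hR ?_
    filter_upwards [Filter.eventually_ge_atTop ({0} : Finset ℕ)] with s hs
    have h0s : (0 : ℕ) ∈ s := hs (Finset.mem_singleton_self 0)
    rw [← Finset.mul_prod_erase s h h0s]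
    have h0 : h 0 = (1 + α * y)⁻¹ := by simp [hh]
    calc h 0 * ∏ j ∈ s.erase 0, h j ≤ h 0 * 1 := by
          refine mul_le_mul_of_nonneg_left ?_ (hpos 0).le
          exact Finset.prod_le_one (fun j _ => (hpos j).le) (fun j _ => hle1 j)
      _ = (1 + α * y)⁻¹ := by rw [mul_one, h0]
  · intro hy1
    rw [htp]
    refine ge_of_tendsto' hR fun s => ?_
    have hprod_le : (∏ j ∈ s, (1 + α ^ (j + 1) * y)) ≤ Real.exp (1 / 3) := by
      have hsumle : (∑ j ∈ s, α ^ (j + 1) * y) ≤ 1 / 3 := by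
        have hsummable : Summable fun j : ℕ => α ^ (j + 1) := by
          have : Summable fun j : ℕ => α * α ^ j :=
            (summable_geometric_of_lt_one hα0.le (by linarith)).mul_left α
          simpa [pow_succ, mul_comm] using this
        have h1 : (∑ j ∈ s, α ^ (j + 1) * y) ≤ ∑ j ∈ s, α ^ (j + 1) := by
          refine Finset.sum_le_sum fun j _ => ?_
          nlinarith [pow_pos hα0 (j + 1)]
        have h2 : (∑ j ∈ s, α ^ (j + 1)) ≤ ∑' j : ℕ, α ^ (j + 1) :=
          Summable.sum_le_tsum s (fun j _ => (pow_pos hα0 (j + 1)).le) hsummable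
        have h3 : (∑' j : ℕ, α ^ (j + 1)) = α * (1 - α)⁻¹ := by
          have : (∑' j : ℕ, α * α ^ j) = α * (1 - α)⁻¹ := by
            rw [tsum_mul_left, tsum_geometric_of_lt_one hα0.le (by linarith)]
          simpa [pow_succ, mul_comm] using this
        have h4 : α * (1 - α)⁻¹ ≤ 1 / 3 := by
          rw [mul_inv_le_iff₀ (by linarith)]
          linarith
        linarith
      calc (∏ j ∈ s, (1 + α ^ (j + 1) * y))
          ≤ ∏ j ∈ s, Real.exp (α ^ (j + 1) * y) := by
            refine Finset.prod_le_prod (fun j _ => ?_) (fun j _ => ?_)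
            · linarith [hden j]
            · linarith [Real.add_one_le_exp (α ^ (j + 1) * y)]
        _ = Real.exp (∑ j ∈ s, α ^ (j + 1) * y) := (Real.exp_sum s _).symm
        _ ≤ Real.exp (1 / 3) := Real.exp_le_exp.mpr hsumle
    have hppos : 0 < ∏ j ∈ s, (1 + α ^ (j + 1) * y) :=
      Finset.prod_pos fun j _ => lt_of_lt_of_le one_pos (hden j)
    calc Real.exp (-(1 / 3)) = (Real.exp (1 / 3))⁻¹ := by rw [Real.exp_neg]
      _ ≤ (∏ j ∈ s, (1 + α ^ (j + 1) * y))⁻¹ := inv_anti₀ hppos hprod_le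
      _ = ∏ j ∈ s, h j := by rw [hh, Finset.prod_inv_distrib]

/-- Two-sided power-law bounds: `f(x) = Θ(x^{-1/d_F})` as `x → ∞`, with
`α = q/4` and `d_F = log(4/q)/log 2`. -/
theorem harmonic_sum_theta (L q : ℝ) (hL : 0 < L) (hq0 : 0 < q) (hq1 : q < 1) :
    let α : ℝ := q / 4
    let dF : ℝ := Real.log (4 / q) / Real.log 2
    let g : ℝ → ℝ := fun x => ∏' j : ℕ, (1 + α ^ (j + 1) * x)⁻¹
    let f : ℝ → ℝ := fun x => ∑' k : ℕ, L / 2 ^ (k + 1) * g (α ^ (k + 1) * x)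
    ∃ c C : ℝ, 0 < c ∧ c ≤ C ∧
      ∀ x : ℝ, 1 ≤ x →
        c * x ^ (-(1 / dF)) ≤ f x ∧ f x ≤ C * x ^ (-(1 / dF)) := by
  intro α dF g f
  have hαdef : α = q / 4 := rfl
  have hα0 : 0 < α := by rw [hαdef]; positivity
  have hα1 : α ≤ 1 / 4 := by rw [hαdef]; linarith
  have hαlt1 : α < 1 := lt_of_le_of_lt hα1 (by norm_num)
  have hgdef : ∀ y : ℝ, g y = ∏' j : ℕ, (1 + α ^ (j + 1) * y)⁻¹ := fun y => rfl
  have hfdef : ∀ x : ℝ, f x = ∑' k : ℕ, L / 2 ^ (k + 1) * g (α ^ (k + 1) * x) :=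
    fun x => rfl
  have hdF : dF = Real.log (4 / q) / Real.log 2 := rfl
  have hlogq : 0 < Real.log (4 / q) :=
    Real.log_pos ((one_lt_div hq0).mpr (by linarith))
  have hdF0 : 0 < dF := by rw [hdF]; exact div_pos hlogq (Real.log_pos one_lt_two)
  have hs0 : 0 < 1 / dF := by positivity
  have hαs : α ^ (1 / dF) = (2 : ℝ)⁻¹ := by
    have hlog : Real.log (q / 4) = -Real.log (4 / q) := by
      rw [← Real.log_inv, inv_div]
    have hne : Real.log (4 / q) ≠ 0 := ne_of_gt hlogq
    have hne2 : Real.log 2 ≠ 0 := ne_of_gt (Real.log_pos one_lt_two)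
    have harg : Real.log α * (1 / dF) = -Real.log 2 := by
      rw [hαdef, hdF, hlog]
      field_simp
    rw [Real.rpow_def_of_pos hα0, harg, Real.exp_neg, Real.exp_log two_pos]
  have hpow2 : ∀ n : ℕ, ((α ^ n : ℝ)) ^ (1 / dF) = ((2 : ℝ) ^ n)⁻¹ := by
    intro n
    calc ((α ^ n : ℝ)) ^ (1 / dF) = (α ^ ((n : ℝ))) ^ (1 / dF) := by
          rw [Real.rpow_natCast]
      _ = α ^ ((n : ℝ) * (1 / dF)) := (Real.rpow_mul hα0.le _ _).symm
      _ = α ^ ((1 / dF) * (n : ℝ)) := by ring_nf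
      _ = (α ^ (1 / dF)) ^ ((n : ℝ)) := Real.rpow_mul hα0.le _ _
      _ = ((2 : ℝ)⁻¹) ^ ((n : ℝ)) := by rw [hαs]
      _ = ((2 : ℝ)⁻¹) ^ n := Real.rpow_natCast _ n
      _ = ((2 : ℝ) ^ n)⁻¹ := by rw [inv_pow]
  refine ⟨L * Real.exp (-(1 / 3)) / 4, 2 * L / α ^ 2 + L, by positivity, ?_, ?_⟩
  · have h1 : Real.exp (-(1 / 3)) ≤ 1 := by
      rw [← Real.exp_zero]; exact Real.exp_le_exp.mpr (by norm_num)
    have h2 : 0 < 2 * L / α ^ 2 := by positivity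
    nlinarith
  · intro x hx
    have hx0 : 0 < x := lt_of_lt_of_le one_pos hx
    obtain ⟨N, hN1, hN2⟩ : ∃ N : ℕ, α ^ N * x ≤ 1 ∧ α ≤ α ^ N * x := by
      have hex : ∃ n : ℕ, α ^ n * x ≤ 1 := by
        obtain ⟨n, hn⟩ := exists_pow_lt_of_lt_one (show (0:ℝ) < 1 / x by positivity) hαlt1
        exact ⟨n, le_of_lt ((lt_div_iff₀ hx0).mp hn)⟩
      refine ⟨Nat.find hex, Nat.find_spec hex, ?_⟩
      by_cases hN0 : Nat.find hex = 0
      · rw [hN0, pow_zero, one_mul]; linarith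
      · obtain ⟨m, hm⟩ := Nat.exists_eq_succ_of_ne_zero hN0
        have hmin : ¬ (α ^ m * x ≤ 1) := Nat.find_min hex (by omega)
        push_neg at hmin
        have : α ^ Nat.find hex * x = α * (α ^ m * x) := by
          rw [hm, pow_succ, mul_comm (α ^ m) α, mul_assoc]
        rw [this]
        nlinarith
    have key1 : ((2 : ℝ) ^ N)⁻¹ ≤ x ^ (-(1 / dF)) := by
      have h1 : (α : ℝ) ^ N ≤ x⁻¹ := by
        rw [← one_div, le_div_iff₀ hx0]; exact hN1
      calc ((2 : ℝ) ^ N)⁻¹ = (α ^ N) ^ (1 / dF) := (hpow2 N).symm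
        _ ≤ (x⁻¹) ^ (1 / dF) :=
            Real.rpow_le_rpow (pow_pos hα0 N).le h1 hs0.le
        _ = x ^ (-(1 / dF)) := by
            rw [Real.inv_rpow hx0.le, ← Real.rpow_neg hx0.le]
    have key2 : x ^ (-(1 / dF)) ≤ 2 * ((2 : ℝ) ^ N)⁻¹ := by
      have h1 : α * x⁻¹ ≤ α ^ N := by
        rw [← div_eq_mul_inv, div_le_iff₀ hx0]; exact hN2
      have h2 : (α * x⁻¹) ^ (1 / dF) = (2 : ℝ)⁻¹ * x ^ (-(1 / dF)) := by
        rw [Real.mul_rpow hα0.le (inv_nonneg.mpr hx0.le), hαs,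
          Real.inv_rpow hx0.le, ← Real.rpow_neg hx0.le]
      calc x ^ (-(1 / dF)) = 2 * ((α * x⁻¹) ^ (1 / dF)) := by
            rw [h2]; ring
        _ ≤ 2 * ((α ^ N) ^ (1 / dF)) := by
            refine mul_le_mul_of_nonneg_left ?_ (by norm_num)
            exact Real.rpow_le_rpow (by positivity) h1 hs0.le
        _ = 2 * ((2 : ℝ) ^ N)⁻¹ := by rw [hpow2]
    have hgp : ∀ k : ℕ, 0 ≤ g (α ^ (k + 1) * x) ∧
        g (α ^ (k + 1) * x) ≤ (1 + α * (α ^ (k + 1) * x))⁻¹ ∧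
        (α ^ (k + 1) * x ≤ 1 → Real.exp (-(1 / 3)) ≤ g (α ^ (k + 1) * x)) := by
      intro k
      rw [hgdef]
      exact g_bounds α (α ^ (k + 1) * x) hα0 hα1
        (mul_nonneg (pow_pos hα0 _).le hx0.le)
    have hT_nonneg : ∀ k : ℕ, 0 ≤ L / 2 ^ (k + 1) * g (α ^ (k + 1) * x) :=
      fun k => mul_nonneg (by positivity) (hgp k).1
    have hT_le : ∀ k : ℕ, L / 2 ^ (k + 1) * g (α ^ (k + 1) * x) ≤ L / 2 ^ (k + 1) := by
      intro k
      have hg1 : g (α ^ (k + 1) * x) ≤ 1 := by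
        refine le_trans (hgp k).2.1 (inv_le_one_of_one_le₀ ?_)
        have := mul_nonneg hα0.le (mul_nonneg (pow_pos hα0 (k+1)).le hx0.le)
        linarith
      calc L / 2 ^ (k + 1) * g (α ^ (k + 1) * x) ≤ L / 2 ^ (k + 1) * 1 :=
            mul_le_mul_of_nonneg_left hg1 (by positivity)
        _ = L / 2 ^ (k + 1) := mul_one _
    have hMsum : Summable fun k : ℕ => L / 2 ^ (k + 1) := by
      have h : Summable fun k : ℕ => (L / 2) * (2⁻¹ : ℝ) ^ k :=
        (summable_geometric_of_lt_one (by norm_num) (by norm_num)).mul_left _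
      refine h.congr fun k => ?_
      rw [pow_succ, div_eq_mul_inv, div_eq_mul_inv, mul_inv, inv_pow]
      ring
    have hsum : Summable fun k : ℕ => L / 2 ^ (k + 1) * g (α ^ (k + 1) * x) :=
      Summable.of_nonneg_of_le hT_nonneg hT_le hMsum
    constructor
    · -- lower bound
      have hy1 : α ^ (N + 1) * x ≤ 1 := by
        have : α ^ (N + 1) * x = α * (α ^ N * x) := by
          rw [pow_succ, mul_comm (α ^ N) α, mul_assoc]
        rw [this]
        nlinarith
      have hge : Real.exp (-(1 / 3)) ≤ g (α ^ (N + 1) * x) := (hgp N).2.2 hy1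
      have hterm : L * Real.exp (-(1 / 3)) / 4 * x ^ (-(1 / dF)) ≤
          L / 2 ^ (N + 1) * g (α ^ (N + 1) * x) := by
        have he : 0 < Real.exp (-(1 / 3)) := Real.exp_pos _
        calc L * Real.exp (-(1 / 3)) / 4 * x ^ (-(1 / dF))
            ≤ L * Real.exp (-(1 / 3)) / 4 * (2 * ((2 : ℝ) ^ N)⁻¹) :=
              mul_le_mul_of_nonneg_left key2 (by positivity)
          _ = L / 2 ^ (N + 1) * Real.exp (-(1 / 3)) := by
              rw [pow_succ]
              field_simp
              ring
          _ ≤ L / 2 ^ (N + 1) * g (α ^ (N + 1) * x) :=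
              mul_le_mul_of_nonneg_left hge (by positivity)
      rw [hfdef]
      exact le_trans hterm (Summable.le_tsum hsum N fun j _ => hT_nonneg j)
    · -- upper bound
      rw [hfdef, ← Summable.sum_add_tsum_nat_add N hsum]
      have head_le : ∑ k ∈ Finset.range N, L / 2 ^ (k + 1) * g (α ^ (k + 1) * x) ≤
          (2 * L / α ^ 2) * ((2 : ℝ) ^ N)⁻¹ := by
        have hr2 : (2 : ℝ) ≤ (2 * α)⁻¹ := by
          have h1 : 0 < 2 * α := by linarith
          have h2 : 2 * α ≤ 2⁻¹ := by linarith
          calc (2 : ℝ) = (2⁻¹ : ℝ)⁻¹ := by norm_num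
            _ ≤ (2 * α)⁻¹ := inv_anti₀ h1 h2
        have hterm : ∀ k ∈ Finset.range N,
            L / 2 ^ (k + 1) * g (α ^ (k + 1) * x) ≤
            (L / (α * x)) * ((2 * α)⁻¹) ^ (k + 1) := by
          intro k _
          have hp1 : (0:ℝ) < α ^ (k + 1) * x := mul_pos (pow_pos hα0 _) hx0
          have hgle : g (α ^ (k + 1) * x) ≤ (α * (α ^ (k + 1) * x))⁻¹ := by
            refine le_trans (hgp k).2.1 (inv_anti₀ (by positivity) ?_)
            linarith
          calc L / 2 ^ (k + 1) * g (α ^ (k + 1) * x)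
              ≤ L / 2 ^ (k + 1) * (α * (α ^ (k + 1) * x))⁻¹ :=
                mul_le_mul_of_nonneg_left hgle (by positivity)
            _ = (L / (α * x)) * ((2 * α)⁻¹) ^ (k + 1) := by
                simp only [div_eq_mul_inv, inv_pow, mul_pow, mul_inv]
                ring
        calc ∑ k ∈ Finset.range N, L / 2 ^ (k + 1) * g (α ^ (k + 1) * x)
            ≤ ∑ k ∈ Finset.range N, (L / (α * x)) * ((2 * α)⁻¹) ^ (k + 1) :=
              Finset.sum_le_sum hterm
          _ = (L / (α * x)) * ∑ k ∈ Finset.range N, ((2 * α)⁻¹) ^ (k + 1) := by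
              rw [Finset.mul_sum]
          _ ≤ (L / (α * x)) * (2 * ((2 * α)⁻¹) ^ N) := by
              refine mul_le_mul_of_nonneg_left (geom_head _ hr2 N) (by positivity)
          _ ≤ (2 * L / α ^ 2) * ((2 : ℝ) ^ N)⁻¹ := by
              have hαN : (0:ℝ) < α ^ N := pow_pos hα0 N
              have e3 : ((2 * α)⁻¹) ^ N = ((2:ℝ) ^ N)⁻¹ * ((α:ℝ) ^ N)⁻¹ := by
                rw [mul_inv, mul_pow, inv_pow, inv_pow]
              have hq' : α ^ 2 * (α ^ N)⁻¹ ≤ α * x := by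
                have hinv : (0:ℝ) < (α ^ N)⁻¹ := inv_pos.mpr hαN
                have h := mul_le_mul_of_nonneg_right hN2 hinv.le
                calc α ^ 2 * (α ^ N)⁻¹ = α * (α * (α ^ N)⁻¹) := by ring
                  _ ≤ α * (α ^ N * x * (α ^ N)⁻¹) := mul_le_mul_of_nonneg_left h hα0.le
                  _ = α * x * (α ^ N * (α ^ N)⁻¹) := by ring
                  _ = α * x := by rw [mul_inv_cancel₀ hαN.ne', mul_one]
              have e1 : L / (α * x) * (2 * ((2 * α)⁻¹) ^ N) =
                  (L * (2 * (((2:ℝ) ^ N)⁻¹ * ((α:ℝ) ^ N)⁻¹))) / (α * x) := by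
                rw [e3]; ring
              have e2 : 2 * L / α ^ 2 * ((2:ℝ) ^ N)⁻¹ =
                  (2 * L * ((2:ℝ) ^ N)⁻¹) / α ^ 2 := by ring
              rw [e1, e2, div_le_div_iff₀ (by positivity) (by positivity)]
              calc L * (2 * (((2:ℝ) ^ N)⁻¹ * ((α:ℝ) ^ N)⁻¹)) * α ^ 2
                  = (2 * L * ((2:ℝ) ^ N)⁻¹) * (α ^ 2 * (α ^ N)⁻¹) := by ring
                _ ≤ (2 * L * ((2:ℝ) ^ N)⁻¹) * (α * x) :=
                    mul_le_mul_of_nonneg_left hq' (by positivity)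
      have htail_sum : Summable fun m : ℕ => L / 2 ^ (m + N + 1) * g (α ^ (m + N + 1) * x) :=
        (summable_nat_add_iff N).mpr hsum
      have tail_le : (∑' m : ℕ, L / 2 ^ (m + N + 1) * g (α ^ (m + N + 1) * x)) ≤
          L * ((2 : ℝ) ^ N)⁻¹ := by
        have hmaj : Summable fun m : ℕ => (L * ((2:ℝ) ^ N)⁻¹ * 2⁻¹) * (2⁻¹ : ℝ) ^ m :=
          (summable_geometric_of_lt_one (by norm_num) (by norm_num)).mul_left _
        have hb : ∀ m : ℕ, L / 2 ^ (m + N + 1) * g (α ^ (m + N + 1) * x) ≤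
            (L * ((2:ℝ) ^ N)⁻¹ * 2⁻¹) * (2⁻¹ : ℝ) ^ m := by
          intro m
          refine le_trans (hT_le (m + N)) (le_of_eq ?_)
          rw [pow_add, pow_add, pow_one, div_eq_mul_inv, mul_inv, mul_inv, inv_pow]
          ring
        calc (∑' m : ℕ, L / 2 ^ (m + N + 1) * g (α ^ (m + N + 1) * x))
            ≤ ∑' m : ℕ, (L * ((2:ℝ) ^ N)⁻¹ * 2⁻¹) * (2⁻¹ : ℝ) ^ m :=
              Summable.tsum_le_tsum hb htail_sum hmaj
          _ = (L * ((2:ℝ) ^ N)⁻¹ * 2⁻¹) * (1 - 2⁻¹)⁻¹ := by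
              rw [tsum_mul_left, tsum_geometric_of_lt_one (by norm_num) (by norm_num)]
          _ = L * ((2 : ℝ) ^ N)⁻¹ := by
              rw [show ((1:ℝ) - 2⁻¹)⁻¹ = 2 by norm_num]; ring
      calc (∑ k ∈ Finset.range N, L / 2 ^ (k + 1) * g (α ^ (k + 1) * x)) +
            ∑' m : ℕ, L / 2 ^ (m + N + 1) * g (α ^ (m + N + 1) * x)
          ≤ (2 * L / α ^ 2) * ((2 : ℝ) ^ N)⁻¹ + L * ((2 : ℝ) ^ N)⁻¹ :=
            add_le_add head_le tail_le
        _ = (2 * L / α ^ 2 + L) * ((2 : ℝ) ^ N)⁻¹ := by ring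
        _ ≤ (2 * L / α ^ 2 + L) * x ^ (-(1 / dF)) :=
            mul_le_mul_of_nonneg_left key1 (by positivity)
end

section
/- Let W ≥ 0 be a random variable and suppose there exist β ∈ (0,1), c₁, c₂ > 0, t₀ > 0 with c₁ t^β ≤ P(W ≤ t) ≤ c₂ t^β for all t ∈ (0, t₀). Then G(u) = E[1/(1+uW)] satisfies: there exist constants C₁, C₂ > 0 and u₀ such that C₁ u^{-β} ≤ G(u) ≤ C₂ u^{-β} for all u ≥ u₀. Consequently log G(u) = -β log u + O(1) as u → ∞. -/
open MeasureTheory Real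

/-- If `P(W ≤ t) ≍ t^β` near `0`, then `G(u) = E[1/(1+uW)] = Θ(u^{-β})` as
`u → ∞`; consequently `log G(u) = -β log u + O(1)`. -/
theorem G_power_law
    {Ω : Type*} [MeasureSpace Ω] (μ : Measure Ω) [IsProbabilityMeasure μ]
    (W : Ω → ℝ) (hWmeas : Measurable W) (hWpos : ∀ ω, 0 ≤ W ω)
    (β c₁ c₂ t₀ : ℝ) (hβ0 : 0 < β) (hβ1 : β < 1) (hc₁ : 0 < c₁) (hc₂ : 0 < c₂)
    (ht₀ : 0 < t₀)
    (hF : ∀ t : ℝ, 0 < t → t < t₀ →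
      c₁ * t ^ β ≤ (μ {ω | W ω ≤ t}).toReal
        ∧ (μ {ω | W ω ≤ t}).toReal ≤ c₂ * t ^ β) :
    ∃ C₁ C₂ u₀ : ℝ, 0 < C₁ ∧ 0 < C₂ ∧ 0 < u₀ ∧
      (∀ u : ℝ, u₀ ≤ u →
        C₁ * u ^ (-β) ≤ (∫ ω, (1 + u * W ω)⁻¹ ∂μ)
          ∧ (∫ ω, (1 + u * W ω)⁻¹ ∂μ) ≤ C₂ * u ^ (-β))
      ∧ ∃ C : ℝ, ∀ u : ℝ, u₀ ≤ u →
          |Real.log (∫ ω, (1 + u * W ω)⁻¹ ∂μ) + β * Real.log u| ≤ C := by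
  have h1β : (0:ℝ) < 1 - β := by linarith
  set C₁ : ℝ := c₁ / 2 with hC₁def
  set C₂ : ℝ := t₀⁻¹ + c₂ * (1 - β)⁻¹ with hC₂def
  set u₀ : ℝ := max 1 (2 / t₀) with hu₀def
  have hC₁pos : 0 < C₁ := by positivity
  have hC₂pos : 0 < C₂ := by positivity
  have hu₀pos : (0:ℝ) < u₀ := lt_of_lt_of_le one_pos (le_max_left _ _)
  have key : ∀ u : ℝ, u₀ ≤ u →
      C₁ * u ^ (-β) ≤ (∫ ω, (1 + u * W ω)⁻¹ ∂μ)
        ∧ (∫ ω, (1 + u * W ω)⁻¹ ∂μ) ≤ C₂ * u ^ (-β) := by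
    intro u hu
    have hu1 : (1:ℝ) ≤ u := le_trans (le_max_left _ _) hu
    have hupos : (0:ℝ) < u := lt_of_lt_of_le one_pos hu1
    have h2t : 2 / t₀ ≤ u := le_trans (le_max_right _ _) hu
    have huinv : 1 / u < t₀ := by
      have h1 : 1 / u ≤ 1 / (2 / t₀) := one_div_le_one_div_of_le (by positivity) h2t
      have h2 : 1 / (2 / t₀) = t₀ / 2 := by field_simp
      rw [h2] at h1
      linarith
    -- basic facts about the integrand
    have hden : ∀ ω, (0:ℝ) < 1 + u * W ω := by
      intro ω; nlinarith [hWpos ω]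
    have hgnn : ∀ ω, (0:ℝ) ≤ (1 + u * W ω)⁻¹ := fun ω => inv_nonneg.2 (hden ω).le
    have hgle1 : ∀ ω, (1 + u * W ω)⁻¹ ≤ 1 := by
      intro ω
      apply inv_le_one_of_one_le₀
      nlinarith [hWpos ω]
    have hgmeas : Measurable fun ω => (1 + u * W ω)⁻¹ :=
      (measurable_const.add (measurable_const.mul hWmeas)).inv
    have hgint : Integrable (fun ω => (1 + u * W ω)⁻¹) μ := by
      apply Integrable.mono' (integrable_const (1:ℝ)) hgmeas.aestronglyMeasurable
      filter_upwards with ω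
      rw [Real.norm_eq_abs, abs_of_nonneg (hgnn ω)]
      exact hgle1 ω
    have hpow : (1 / u) ^ β = u ^ (-β) := by
      rw [one_div, ← Real.rpow_neg_one u, ← Real.rpow_mul hupos.le, neg_one_mul]
    constructor
    · -- lower bound
      have hFlow := (hF (1/u) (by positivity) huinv).1
      have hAmeas : MeasurableSet {ω | W ω ≤ 1/u} := hWmeas measurableSet_Iic
      have h1 : (2:ℝ)⁻¹ * (μ {ω | W ω ≤ 1/u}).toReal
          ≤ ∫ ω in {ω | W ω ≤ 1/u}, (1 + u * W ω)⁻¹ ∂μ := by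
        apply setIntegral_ge_of_const_le_real hAmeas (measure_ne_top μ _) _ hgint.integrableOn
        intro ω hω
        have hW : W ω ≤ 1/u := hω
        have h2 : 1 + u * W ω ≤ 2 := by
          have : u * W ω ≤ u * (1/u) := mul_le_mul_of_nonneg_left hW hupos.le
          rw [mul_one_div, div_self hupos.ne'] at this
          linarith
        calc (2:ℝ)⁻¹ ≤ (1 + u * W ω)⁻¹ := by
              apply inv_anti₀ (hden ω) h2
          _ = _ := rfl
      have h2 : ∫ ω in {ω | W ω ≤ 1/u}, (1 + u * W ω)⁻¹ ∂μ ≤ ∫ ω, (1 + u * W ω)⁻¹ ∂μ :=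
        setIntegral_le_integral hgint (ae_of_all _ hgnn)
      have h3 : C₁ * u ^ (-β) = (2:ℝ)⁻¹ * (c₁ * (1/u) ^ β) := by
        rw [hpow, hC₁def]; ring
      rw [h3]
      have h4 : (2:ℝ)⁻¹ * (c₁ * (1/u) ^ β) ≤ (2:ℝ)⁻¹ * (μ {ω | W ω ≤ 1/u}).toReal := by
        apply mul_le_mul_of_nonneg_left hFlow (by norm_num)
      linarith
    · -- upper bound
      set s : ℝ := (1 + u * t₀)⁻¹ with hsdef
      have hspos : 0 < s := by positivity
      have hsle1 : s ≤ 1 := by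
        rw [hsdef]
        apply inv_le_one_of_one_le₀
        nlinarith
      have hGrepr : ∫ ω, (1 + u * W ω)⁻¹ ∂μ
          = (∫⁻ t in Set.Ioi (0:ℝ), μ {a | t < (1 + u * W a)⁻¹}).toReal := by
        rw [MeasureTheory.integral_eq_lintegral_of_nonneg_ae (ae_of_all _ hgnn)
          hgmeas.aestronglyMeasurable,
          lintegral_eq_lintegral_meas_lt μ (ae_of_all _ hgnn) hgmeas.aemeasurable]
      -- split the domain
      have h01 : Set.Ioi (0:ℝ) = (Set.Ioc 0 s ∪ Set.Ioc s 1) ∪ Set.Ioi 1 := by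
        rw [Set.Ioc_union_Ioc_eq_Ioc hspos.le hsle1, Set.Ioc_union_Ioi_eq_Ioi zero_le_one]
      have hdisj1 : Disjoint (Set.Ioc (0:ℝ) s ∪ Set.Ioc s 1) (Set.Ioi 1) := by
        rw [Set.Ioc_union_Ioc_eq_Ioc hspos.le hsle1]
        exact Set.Ioc_disjoint_Ioi le_rfl
      have hdisj2 : Disjoint (Set.Ioc (0:ℝ) s) (Set.Ioc s 1) := by
        rw [Set.disjoint_left]
        rintro t ⟨_, ht2⟩ ⟨ht3, _⟩
        exact absurd ht2 (not_le.2 ht3)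
      have hsplit : ∫⁻ t in Set.Ioi (0:ℝ), μ {a | t < (1 + u * W a)⁻¹}
          = (∫⁻ t in Set.Ioc (0:ℝ) s, μ {a | t < (1 + u * W a)⁻¹})
            + (∫⁻ t in Set.Ioc s 1, μ {a | t < (1 + u * W a)⁻¹})
            + (∫⁻ t in Set.Ioi (1:ℝ), μ {a | t < (1 + u * W a)⁻¹}) := by
        rw [h01, lintegral_union measurableSet_Ioi hdisj1,
          lintegral_union measurableSet_Ioc hdisj2]
      -- piece 3 : zero
      have hP3 : ∫⁻ t in Set.Ioi (1:ℝ), μ {a | t < (1 + u * W a)⁻¹} = 0 := by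
        have : ∀ᵐ t ∂(volume.restrict (Set.Ioi (1:ℝ))),
            μ {a | t < (1 + u * W a)⁻¹} = 0 := by
          rw [ae_restrict_iff' measurableSet_Ioi]
          filter_upwards with t ht
          have : {a | t < (1 + u * W a)⁻¹} = ∅ := by
            ext a
            simp only [Set.mem_setOf_eq, Set.mem_empty_iff_false, iff_false, not_lt]
            exact le_trans (hgle1 a) ht.le
          rw [this, measure_empty]
        calc ∫⁻ t in Set.Ioi (1:ℝ), μ {a | t < (1 + u * W a)⁻¹}
            = ∫⁻ _ in Set.Ioi (1:ℝ), 0 := lintegral_congr_ae this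
          _ = 0 := lintegral_zero
      -- piece 1
      have hP1 : ∫⁻ t in Set.Ioc (0:ℝ) s, μ {a | t < (1 + u * W a)⁻¹}
          ≤ ENNReal.ofReal s := by
        calc ∫⁻ t in Set.Ioc (0:ℝ) s, μ {a | t < (1 + u * W a)⁻¹}
            ≤ ∫⁻ _ in Set.Ioc (0:ℝ) s, 1 := lintegral_mono fun t => prob_le_one
          _ = volume (Set.Ioc (0:ℝ) s) := by rw [setLIntegral_one]
          _ = ENNReal.ofReal s := by rw [Real.volume_Ioc, sub_zero]
      -- piece 2
      have hP2 : ∫⁻ t in Set.Ioc s 1, μ {a | t < (1 + u * W a)⁻¹}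
          ≤ ENNReal.ofReal (c₂ * (1 - β)⁻¹ * u ^ (-β)) := by
        have hrpm : Measurable fun t : ℝ => t ^ (-β) :=
          measurable_of_continuousOn_compl_singleton 0
            (continuousOn_of_forall_continuousAt fun x hx =>
              Real.continuousAt_rpow_const x (-β) (Or.inl hx))
        have hbmeas : Measurable fun t : ℝ => ENNReal.ofReal (c₂ * u ^ (-β) * t ^ (-β)) :=
          ENNReal.measurable_ofReal.comp (hrpm.const_mul _)
        have hb : ∀ t ∈ Set.Ioc s 1,
            μ {a | t < (1 + u * W a)⁻¹} ≤ ENNReal.ofReal (c₂ * u ^ (-β) * t ^ (-β)) := by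
          intro t ht
          have ht0 : 0 < t := lt_of_lt_of_le hspos ht.1.le
          rcases lt_or_eq_of_le ht.2 with htlt | hteq
          · -- t < 1
            have hr0 : 0 < (1/t - 1)/u := by
              have : 1 < 1/t := by
                rw [lt_div_iff₀ ht0]; linarith
              apply div_pos (by linarith) hupos
            have hrt : (1/t - 1)/u < t₀ := by
              have h2 : 1/t < 1 + u * t₀ := by
                rw [div_lt_iff₀ ht0]
                have h3 := mul_lt_mul_of_pos_left ht.1 (show (0:ℝ) < 1 + u * t₀ by positivity)
                rw [hsdef, mul_inv_cancel₀ (show (1 + u * t₀) ≠ 0 by positivity)] at h3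
                linarith [h3]
              rw [div_lt_iff₀ hupos]
              linarith
            have hsub : {a | t < (1 + u * W a)⁻¹} ⊆ {ω | W ω ≤ (1/t - 1)/u} := by
              intro a ha
              have ha' : t < (1 + u * W a)⁻¹ := ha
              have h1 : t * (1 + u * W a) < 1 := by
                have := mul_lt_mul_of_pos_right ha' (hden a)
                rwa [inv_mul_cancel₀ (hden a).ne'] at this
              have h2 : 1 + u * W a < 1/t := by
                rw [lt_div_iff₀ ht0]; nlinarith
              show W a ≤ (1/t - 1)/u
              rw [le_div_iff₀ hupos]
              nlinarith
            have hμt := (hF _ hr0 hrt).2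
            have hreal : c₂ * ((1/t - 1)/u) ^ β ≤ c₂ * u ^ (-β) * t ^ (-β) := by
              have h1 : (1/t - 1)/u ≤ (t * u)⁻¹ := by
                have : (1/t - 1)/u ≤ (1/t)/u := by gcongr; linarith
                calc (1/t - 1)/u ≤ (1/t)/u := this
                  _ = (t * u)⁻¹ := by rw [div_div, one_div]
              have h2 : ((1/t - 1)/u) ^ β ≤ ((t * u)⁻¹) ^ β :=
                Real.rpow_le_rpow hr0.le h1 hβ0.le
              have h3 : ((t * u)⁻¹) ^ β = u ^ (-β) * t ^ (-β) := by
                rw [Real.inv_rpow (by positivity), Real.mul_rpow ht0.le hupos.le,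
                  mul_inv, ← Real.rpow_neg ht0.le, ← Real.rpow_neg hupos.le, mul_comm]
              calc c₂ * ((1/t - 1)/u) ^ β ≤ c₂ * ((t * u)⁻¹) ^ β := by
                    apply mul_le_mul_of_nonneg_left h2 hc₂.le
                _ = c₂ * u ^ (-β) * t ^ (-β) := by rw [h3]; ring
            calc μ {a | t < (1 + u * W a)⁻¹}
                ≤ μ {ω | W ω ≤ (1/t - 1)/u} := measure_mono hsub
              _ = ENNReal.ofReal ((μ {ω | W ω ≤ (1/t - 1)/u}).toReal) :=
                  (ENNReal.ofReal_toReal (measure_ne_top μ _)).symm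
              _ ≤ ENNReal.ofReal (c₂ * ((1/t - 1)/u) ^ β) := ENNReal.ofReal_le_ofReal hμt
              _ ≤ ENNReal.ofReal (c₂ * u ^ (-β) * t ^ (-β)) :=
                  ENNReal.ofReal_le_ofReal hreal
          · -- t = 1
            subst hteq
            have : {a | (1:ℝ) < (1 + u * W a)⁻¹} = ∅ := by
              ext a
              simp only [Set.mem_setOf_eq, Set.mem_empty_iff_false, iff_false, not_lt]
              exact hgle1 a
            rw [this, measure_empty]
            exact zero_le
        have hii : IntervalIntegrable (fun t : ℝ => t ^ (-β)) volume 0 1 :=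
          intervalIntegral.intervalIntegrable_rpow' (by linarith)
        have hIonc : IntegrableOn (fun t : ℝ => c₂ * u ^ (-β) * t ^ (-β))
            (Set.Ioc (0:ℝ) 1) volume := hii.1.const_mul _
        have hnnb : 0 ≤ᵐ[volume.restrict (Set.Ioc (0:ℝ) 1)]
            fun t : ℝ => c₂ * u ^ (-β) * t ^ (-β) :=
          (ae_restrict_iff' measurableSet_Ioc).2
            (ae_of_all _ fun t ht => by have h := ht.1; positivity)
        have hval : ∫ t in Set.Ioc (0:ℝ) 1, c₂ * u ^ (-β) * t ^ (-β)
            = c₂ * (1 - β)⁻¹ * u ^ (-β) := by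
          rw [MeasureTheory.integral_const_mul]
          have hint1 : ∫ t in Set.Ioc (0:ℝ) 1, t ^ (-β) = (1 - β)⁻¹ := by
            rw [← intervalIntegral.integral_of_le (zero_le_one : (0:ℝ) ≤ 1),
              integral_rpow (Or.inl (by linarith))]
            rw [Real.one_rpow, Real.zero_rpow (show -β + 1 ≠ 0 by intro h; linarith)]
            rw [show -β + 1 = 1 - β by ring, sub_zero, one_div]
          rw [hint1]; ring
        calc ∫⁻ t in Set.Ioc s 1, μ {a | t < (1 + u * W a)⁻¹}
            ≤ ∫⁻ t in Set.Ioc s 1, ENNReal.ofReal (c₂ * u ^ (-β) * t ^ (-β)) :=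
              setLIntegral_mono hbmeas hb
          _ ≤ ∫⁻ t in Set.Ioc (0:ℝ) 1, ENNReal.ofReal (c₂ * u ^ (-β) * t ^ (-β)) :=
              lintegral_mono_set (Set.Ioc_subset_Ioc_left hspos.le)
          _ = ENNReal.ofReal (∫ t in Set.Ioc (0:ℝ) 1, c₂ * u ^ (-β) * t ^ (-β)) :=
              (ofReal_integral_eq_lintegral_ofReal hIonc hnnb).symm
          _ = ENNReal.ofReal (c₂ * (1 - β)⁻¹ * u ^ (-β)) := by rw [hval]
      -- combine
      have hsum : ∫⁻ t in Set.Ioi (0:ℝ), μ {a | t < (1 + u * W a)⁻¹}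
          ≤ ENNReal.ofReal (s + c₂ * (1 - β)⁻¹ * u ^ (-β)) := by
        rw [hsplit, hP3, add_zero,
          ENNReal.ofReal_add hspos.le (by positivity)]
        exact add_le_add hP1 hP2
      have hG : ∫ ω, (1 + u * W ω)⁻¹ ∂μ ≤ s + c₂ * (1 - β)⁻¹ * u ^ (-β) := by
        rw [hGrepr]
        calc (∫⁻ t in Set.Ioi (0:ℝ), μ {a | t < (1 + u * W a)⁻¹}).toReal
            ≤ (ENNReal.ofReal (s + c₂ * (1 - β)⁻¹ * u ^ (-β))).toReal :=
              ENNReal.toReal_mono ENNReal.ofReal_ne_top hsum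
          _ = s + c₂ * (1 - β)⁻¹ * u ^ (-β) :=
              ENNReal.toReal_ofReal (by positivity)
      have hs_le : s ≤ t₀⁻¹ * u ^ (-β) := by
        have h1 : s ≤ (u * t₀)⁻¹ := by
          apply inv_anti₀ (by positivity)
          linarith
        have h2 : u⁻¹ ≤ u ^ (-β) := by
          rw [← Real.rpow_neg_one u]
          exact Real.rpow_le_rpow_of_exponent_le hu1 (by linarith)
        calc s ≤ (u * t₀)⁻¹ := h1
          _ = u⁻¹ * t₀⁻¹ := by rw [mul_inv]
          _ ≤ u ^ (-β) * t₀⁻¹ := by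
              apply mul_le_mul_of_nonneg_right h2 (by positivity)
          _ = t₀⁻¹ * u ^ (-β) := by ring
      calc ∫ ω, (1 + u * W ω)⁻¹ ∂μ ≤ s + c₂ * (1 - β)⁻¹ * u ^ (-β) := hG
        _ ≤ t₀⁻¹ * u ^ (-β) + c₂ * (1 - β)⁻¹ * u ^ (-β) := by linarith
        _ = C₂ * u ^ (-β) := by rw [hC₂def]; ring
  refine ⟨C₁, C₂, u₀, hC₁pos, hC₂pos, hu₀pos, key, ?_⟩
  refine ⟨max |Real.log C₁| |Real.log C₂|, ?_⟩
  intro u hu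
  have hu1 : (1:ℝ) ≤ u := le_trans (le_max_left _ _) hu
  have hupos : (0:ℝ) < u := lt_of_lt_of_le one_pos hu1
  obtain ⟨hlow, hhigh⟩ := key u hu
  have hpowpos : (0:ℝ) < u ^ (-β) := Real.rpow_pos_of_pos hupos _
  have hGpos : 0 < ∫ ω, (1 + u * W ω)⁻¹ ∂μ := lt_of_lt_of_le (by positivity) hlow
  have hlog1 : Real.log (C₁ * u ^ (-β)) ≤ Real.log (∫ ω, (1 + u * W ω)⁻¹ ∂μ) :=
    Real.log_le_log (by positivity) hlow
  have hlog2 : Real.log (∫ ω, (1 + u * W ω)⁻¹ ∂μ) ≤ Real.log (C₂ * u ^ (-β)) :=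
    Real.log_le_log hGpos hhigh
  have heq1 : Real.log (C₁ * u ^ (-β)) = Real.log C₁ - β * Real.log u := by
    rw [Real.log_mul hC₁pos.ne' hpowpos.ne', Real.log_rpow hupos]
    ring
  have heq2 : Real.log (C₂ * u ^ (-β)) = Real.log C₂ - β * Real.log u := by
    rw [Real.log_mul hC₂pos.ne' hpowpos.ne', Real.log_rpow hupos]
    ring
  rw [heq1] at hlog1
  rw [heq2] at hlog2
  rw [abs_le]
  constructor
  · have : -|Real.log C₁| ≤ Real.log C₁ := neg_abs_le _
    have h := le_max_left |Real.log C₁| |Real.log C₂|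
    linarith
  · have : Real.log C₂ ≤ |Real.log C₂| := le_abs_self _
    have h := le_max_right |Real.log C₁| |Real.log C₂|
    linarith
end
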